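/- (Weight-zero case of the key step in Lemma lem:KerFnFnd-mod, §9.) Assume O is henselian and admits a coefficient field K ⊆ O (e.g. O = K[[z]]). Then for all integers r ≥ 0 and n ≥ 1: p̲(Wₙ(L)) ∩ Fil^p_r W_{n+1}(L) = p̲(Fil^p_r Wₙ(L)); equivalently, if x ∈ Wₙ(L) satisfies p̲(x) ∈ Fil^p_r W_{n+1}(L), then x ∈ Fil^p_r Wₙ(L). -/

import Mathlib

/-!
For `ρ ≥ 1`, `fil_ρ Wₖ(L)` is cut out by coordinatewise bounds `p^(k-1-i) v(aᵢ) ≥ -c(i)`,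
with `c(i) = ρ - 1` below the index `k - min(v_p(ρ), k)` and `c(i) = ρ` from there on; sets given
by monotone nonnegative bounds of this kind are additive subgroups. In characteristic `p`,
`p̲ x = (0, x₀^p, …, x_{n-1}^p)` and `p • y = p̲ (R y)`. Hence if `p̲ x = ∑ pˢ fₛ` with
`fₛ ∈ fil_{r pˢ}`, then `w = ∑ pᵗ R(f_{t+1}) ∈ Fil^p_r Wₙ` and `p̲ (x - w) = f₀ ∈ fil_r`, and comparing
coordinates (valuations being integers) gives `x - w ∈ fil_r Wₙ(L)`.
-/

noncomputable section

open scoped Classical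

/-- A discretely valued field: a field `L` together with a normalized additive valuation
`v : L → ℤ ∪ {∞}` and a uniformizer `z` (so `v z = 1`).  The valuation ring is
`O = {a : L | 0 ≤ v a}`, with maximal ideal `𝔪 = {a : L | 1 ≤ v a}`. -/
structure DVField (L : Type) [Field L] : Type where
  v : L → WithTop ℤ
  z : L
  v_top : ∀ a : L, v a = ⊤ ↔ a = 0
  v_mul : ∀ a b : L, v (a * b) = v a + v b
  v_add : ∀ a b : L, min (v a) (v b) ≤ v (a + b)
  v_z : v z = 1

namespace DVField

variable {L : Type} [Field L]

/-- `Wₙ(O) ⊆ Wₙ(L)`: the truncated Witt vectors all of whose components are integral. -/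
def WO (D : DVField L) (p n : ℕ) : Set (TruncatedWittVector p n L) :=
  {x | ∀ i : Fin n, 0 ≤ D.v (x.coeff i)}

/-- The Brylinski–Kato filtration
`fil^log_r Wₙ(L) = {(a₀, …, a_{n-1}) | p^{n-1-i} · v(aᵢ) ≥ -r for all i}`. -/
def filLog (D : DVField L) (p r n : ℕ) : Set (TruncatedWittVector p n L) :=
  {x | ∀ i : Fin n, (↑(-(r : ℤ)) : WithTop ℤ) ≤ p ^ (n - 1 - (i : ℕ)) • D.v (x.coeff i)}

end DVField

/-- The Verschiebung `V : Wₙ(L) → W_{n+1}(L)`, shifting components. -/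
def wV {p : ℕ} {L : Type} [Field L] {n : ℕ} (x : TruncatedWittVector p n L) :
    TruncatedWittVector p (n + 1) L :=
  TruncatedWittVector.mk p fun i =>
    if h : (i : ℕ) = 0 then 0 else x.coeff ⟨(i : ℕ) - 1, by have := i.isLt; omega⟩

/-- The iterated Verschiebung `V^{n-m} : W_m(L) → Wₙ(L)` (for `m ≤ n`), given by shifting
components by `n - m`. -/
def wVit {p : ℕ} {L : Type} [Field L] {m n : ℕ} (x : TruncatedWittVector p m L) :
    TruncatedWittVector p n L :=
  TruncatedWittVector.mk p fun i =>
    if h : n - m ≤ (i : ℕ) ∧ (i : ℕ) - (n - m) < m then x.coeff ⟨(i : ℕ) - (n - m), h.2⟩ else 0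

/-- The restriction `R : W_{n+1}(L) → Wₙ(L)`, dropping the last component. -/
def wR {p : ℕ} {L : Type} [Field L] {n : ℕ} (x : TruncatedWittVector p (n + 1) L) :
    TruncatedWittVector p n L :=
  TruncatedWittVector.mk p fun i => x.coeff i.castSucc

/-- The iterated restriction `R^{m-n} : W_m(L) → Wₙ(L)` (for `n ≤ m`), keeping the first `n`
components. -/
def wRes {p : ℕ} {L : Type} [Field L] {m n : ℕ} (x : TruncatedWittVector p m L) :
    TruncatedWittVector p n L :=
  TruncatedWittVector.mk p fun i => if h : (i : ℕ) < m then x.coeff ⟨(i : ℕ), h⟩ else 0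

/-- The Frobenius `F : W_{n+1}(L) → Wₙ(L)` in characteristic `p`:
componentwise `p`-th power followed by restriction. -/
def wF {p : ℕ} {L : Type} [Field L] {n : ℕ} (x : TruncatedWittVector p (n + 1) L) :
    TruncatedWittVector p n L :=
  TruncatedWittVector.mk p fun i => x.coeff i.castSucc ^ p

/-- The Teichmüller lift `[a] = (a, 0, …, 0)`. -/
def wT (p : ℕ) {L : Type} [Field L] (n : ℕ) (a : L) : TruncatedWittVector p n L :=
  TruncatedWittVector.mk p fun i => if (i : ℕ) = 0 then a else 0

/-- The map `p̲ : Wₙ(L) → W_{n+1}(L)`: lift to length `n+1` (by appending a zero component)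
and multiply by `p`. -/
def wP {p : ℕ} [Fact p.Prime] {L : Type} [Field L] {n : ℕ} (x : TruncatedWittVector p n L) :
    TruncatedWittVector p (n + 1) L :=
  p • (wRes x : TruncatedWittVector p (n + 1) L)

namespace DVField

variable {L : Type} [Field L]

/-- The Kato–Matsuda filtration
`fil_r Wₙ(L) = fil^log_{r-1} Wₙ(L) + V^{n-m}(fil^log_r W_m(L))` where `m = min(v_p(r), n)`,
and `fil_0 Wₙ(L) = Wₙ(O)`. -/
def filKM (D : DVField L) (p : ℕ) [Fact p.Prime] (r n : ℕ) :
    Set (TruncatedWittVector p n L) :=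
  if r = 0 then D.WO p n
  else {x | ∃ a ∈ D.filLog p (r - 1) n,
    ∃ b ∈ D.filLog p r (min (padicValNat p r) n), x = a + wVit b}

/-- The `p`-saturation `Fil^p_r Wₙ(L) = Σ_{s=0}^{n-1} p^s · fil_{r·p^s} Wₙ(L)`. -/
def FilP (D : DVField L) (p : ℕ) [Fact p.Prime] (r n : ℕ) :
    Set (TruncatedWittVector p n L) :=
  {x | ∃ f : Fin n → TruncatedWittVector p n L,
      (∀ s : Fin n, f s ∈ D.filKM p (r * p ^ (s : ℕ)) n) ∧
      x = ∑ s : Fin n, p ^ (s : ℕ) • f s}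

end DVField

namespace DVField

variable {L : Type} [Field L]

/-- The valuation ring `O` is henselian: every monic polynomial with integral coefficients
having an integral approximate root at which the derivative is a unit has an integral
actual root refining it. -/
def IsHenselian (D : DVField L) : Prop :=
  ∀ f : Polynomial L, f.Monic → (∀ i : ℕ, 0 ≤ D.v (f.coeff i)) →
    ∀ a₀ : L, 0 ≤ D.v a₀ → 1 ≤ D.v (f.eval a₀) →
      D.v ((Polynomial.derivative f).eval a₀) = 0 →
        ∃ a : L, 0 ≤ D.v a ∧ f.eval a = 0 ∧ 1 ≤ D.v (a - a₀)

/-- `K` is a coefficient field for the valuation ring `O`: a subfield of `L` contained in `O`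
mapping isomorphically onto the residue field `κ = O/𝔪` (surjectivity onto `κ` suffices, since
a subfield of `O` automatically injects into `κ`). -/
def IsCoeffField (D : DVField L) (K : Subfield L) : Prop :=
  (∀ a ∈ K, 0 ≤ D.v a) ∧ (∀ a : L, 0 ≤ D.v a → ∃ μ ∈ K, 1 ≤ D.v (a - μ))

end DVField

namespace WittVector

variable {p : ℕ} [hp : Fact p.Prime]

private theorem teichmuller_mul_eq_mk_of_invertible {R : Type*} [CommRing R] [Invertible (p : R)]
    (a : R) (x : WittVector p R) :
    teichmuller p a * x = WittVector.mk p (fun i => a ^ p ^ i * x.coeff i) := by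
  apply (ghostMap.bijective_of_invertible p R).1
  ext n
  simp only [map_mul, ghostMap_apply]
  rw [ghostComponent_teichmuller]
  simp only [ghostComponent_apply, aeval_wittPolynomial, coeff_mk, Finset.mul_sum]
  refine Finset.sum_congr rfl fun i hi => ?_
  rw [mul_pow, ← pow_mul, ← pow_add, Nat.add_sub_cancel' (Finset.mem_range_succ_iff.mp hi)]
  ring

private theorem teichmuller_mul_eq_mk_mvPolynomial {σ : Type*} (a : MvPolynomial σ ℤ)
    (x : WittVector p (MvPolynomial σ ℤ)) :
    teichmuller p a * x = WittVector.mk p (fun i => a ^ p ^ i * x.coeff i) := by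
  have : Invertible (p : MvPolynomial σ ℚ) :=
    (invertibleOfNonzero (by exact_mod_cast hp.out.ne_zero : (p : ℚ) ≠ 0)).map
      (algebraMap ℚ (MvPolynomial σ ℚ)) |>.copy _ (by simp)
  refine map_injective (MvPolynomial.map (Int.castRingHom ℚ))
    (MvPolynomial.map_injective _ Int.cast_injective) ?_
  rw [map_mul, map_teichmuller, teichmuller_mul_eq_mk_of_invertible]
  ext n
  simp [map_coeff]

theorem teichmuller_mul_coeff {R : Type*} [CommRing R] (a : R) (x : WittVector p R) (i : ℕ) :
    (teichmuller p a * x).coeff i = a ^ p ^ i * x.coeff i := by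
  obtain ⟨a, rfl⟩ := MvPolynomial.counit_surjective R a
  obtain ⟨x, rfl⟩ := map_surjective _ (MvPolynomial.counit_surjective R) x
  rw [← map_teichmuller, ← map_mul, teichmuller_mul_eq_mk_mvPolynomial, map_coeff, coeff_mk,
    map_coeff]
  simp

theorem coeff_sub_congr {R : Type*} [CommRing R] {x x' y y' : WittVector p R} {i : ℕ}
    (hx : ∀ j ≤ i, x.coeff j = x'.coeff j) (hy : ∀ j ≤ i, y.coeff j = y'.coeff j) :
    (x - y).coeff i = (x' - y').coeff i := by
  have htrunc : ∀ {u u' : WittVector p R}, (∀ j ≤ i, u.coeff j = u'.coeff j) →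
      truncate (i + 1) u = truncate (i + 1) u' := fun h =>
    TruncatedWittVector.ext fun j => by simpa using h j (Nat.lt_succ_iff.mp j.isLt)
  have := congrArg (TruncatedWittVector.coeff ⟨i, i.lt_succ_self⟩)
    (show truncate (i + 1) (x - y) = truncate (i + 1) (x' - y') by
      rw [map_sub, map_sub, htrunc hx, htrunc hy])
  rwa [coeff_truncate, coeff_truncate] at this

theorem coeff_sub_mem {R : Type*} [CommRing R] (S : Subring R) {x y : WittVector p R} {i : ℕ}
    (hx : ∀ j ≤ i, x.coeff j ∈ S) (hy : ∀ j ≤ i, y.coeff j ∈ S) : (x - y).coeff i ∈ S := by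
  have lift : ∀ {u : WittVector p R}, (∀ j ≤ i, u.coeff j ∈ S) →
      ∃ U : WittVector p S, ∀ j ≤ i, u.coeff j = (map S.subtype U).coeff j := fun {u} hu =>
    ⟨WittVector.mk p fun j => if h : u.coeff j ∈ S then ⟨_, h⟩ else 0, fun j hj => by
      simp [map_coeff, dif_pos (hu j hj)]⟩
  obtain ⟨X, hX⟩ := lift hx
  obtain ⟨Y, hY⟩ := lift hy
  rw [coeff_sub_congr hX hY, ← map_sub, map_coeff]
  exact ((X - Y).coeff i).2

end WittVector

namespace WithTop

theorem nsmul_top_of_ne_zero {n : ℕ} (hn : n ≠ 0) : n • (⊤ : WithTop ℤ) = ⊤ := by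
  obtain ⟨m, rfl⟩ := Nat.exists_eq_succ_of_ne_zero hn
  rw [succ_nsmul, WithTop.add_top]

theorem coe_neg_le_iff_nonneg_add {a : ℤ} {b : WithTop ℤ} :
    ((-a : ℤ) : WithTop ℤ) ≤ b ↔ 0 ≤ (a : WithTop ℤ) + b := by
  cases b with
  | top => simp
  | coe b => norm_cast; omega

theorem coe_neg_mul_le_nsmul {a : WithTop ℤ} {c : ℤ} (P : ℕ) (h : ((-c : ℤ) : WithTop ℤ) ≤ a) :
    ((-(P * c) : ℤ) : WithTop ℤ) ≤ P • a := by
  have := nsmul_le_nsmul_right h P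
  rwa [← WithTop.coe_nsmul, nsmul_eq_mul, mul_neg] at this

/-- Division by `P` with rounding, which is where discreteness of the valuation enters. -/
theorem coe_neg_le_of_le_nsmul {a : WithTop ℤ} {P : ℕ} {c d : ℤ}
    (h : ((-d : ℤ) : WithTop ℤ) ≤ P • a) (hd : d < P * (c + 1)) : ((-c : ℤ) : WithTop ℤ) ≤ a := by
  cases a with
  | top => exact le_top
  | coe t =>
    rw [← WithTop.coe_nsmul, WithTop.coe_le_coe, nsmul_eq_mul] at h
    rw [WithTop.coe_le_coe]
    nlinarith

end WithTop

theorem pow_nsmul_eq_nsmul_pow_nsmul {M : Type*} [AddMonoid M] (p : ℕ) {e e' : ℕ} (h : e = e' + 1)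
    (a : M) : p ^ e • a = p • p ^ e' • a := by
  rw [h, smul_smul, pow_succ']

namespace DVField

variable {L : Type} [Field L] (D : DVField L)

theorem v_zero : D.v 0 = ⊤ := (D.v_top 0).mpr rfl

theorem v_one : D.v 1 = 0 := by
  have h := D.v_mul 1 1
  rw [mul_one] at h
  obtain ⟨t, ht⟩ := WithTop.ne_top_iff_exists.mp ((D.v_top 1).not.mpr one_ne_zero)
  rw [← ht, ← WithTop.coe_add, WithTop.coe_inj] at h
  rw [← ht, show t = 0 by omega, WithTop.coe_zero]

def toAddValuation : AddValuation L (WithTop ℤ) :=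
  AddValuation.of D.v D.v_zero D.v_one D.v_add D.v_mul

theorem v_pow (a : L) (m : ℕ) : D.v (a ^ m) = m • D.v a :=
  D.toAddValuation.map_pow a m

theorem v_neg (a : L) : D.v (-a) = D.v a :=
  D.toAddValuation.map_neg a

theorem v_z_pow (m : ℕ) : D.v (D.z ^ m) = ((m : ℤ) : WithTop ℤ) := by
  rw [v_pow, v_z, ← WithTop.coe_one, ← WithTop.coe_nsmul, nsmul_one]

def integers : Subring L where
  carrier := {a | 0 ≤ D.v a}
  one_mem' := D.v_one.ge
  mul_mem' {a b} ha hb := show 0 ≤ D.v (a * b) from D.v_mul a b ▸ add_nonneg ha hb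
  add_mem' {a b} ha hb := (le_min ha hb).trans (D.v_add a b)
  zero_mem' := by simp [D.v_zero]
  neg_mem' {a} ha := by
    change 0 ≤ D.v (-a)
    rwa [D.v_neg]

end DVField

namespace TruncatedWittVector

variable {p : ℕ} [Fact p.Prime] {R : Type*} [CommRing R] {k : ℕ}

theorem coeff_sub_eq_coeff_out_sub (x y : TruncatedWittVector p k R) (i : Fin k) :
    (x - y).coeff i = (x.out - y.out).coeff i := by
  rw [← WittVector.coeff_truncate (x.out - y.out) i, map_sub]
  congr 2 <;> exact (truncateFun_out _).symm

theorem coeff_sub_eq_zero_of_coeff_eq {x y : TruncatedWittVector p k R} {l : ℕ}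
    (h : ∀ j : Fin k, (j : ℕ) < l → x.coeff j = y.coeff j) {i : Fin k} (hi : (i : ℕ) < l) :
    (x - y).coeff i = 0 := by
  rw [coeff_sub_eq_coeff_out_sub, WittVector.coeff_sub_congr (x' := y.out) (y' := y.out)
    (fun j hj => ?_) fun _ _ => rfl, sub_self, WittVector.zero_coeff]
  have hjk : j < k := by omega
  have hjl : ((⟨j, hjk⟩ : Fin k) : ℕ) < l := by simp only; omega
  rw [show j = ((⟨j, hjk⟩ : Fin k) : ℕ) from rfl, coeff_out, coeff_out, h _ hjl]

end TruncatedWittVector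

namespace DVField

variable {L : Type} [Field L] (D : DVField L) (p : ℕ)

def filLogFun (c : ℕ → ℤ) (k : ℕ) : Set (TruncatedWittVector p k L) :=
  {x | ∀ i : Fin k, ((-(c i) : ℤ) : WithTop ℤ) ≤ p ^ (k - 1 - (i : ℕ)) • D.v (x.coeff i)}

variable {D p}

theorem filLogFun_mono {c c' : ℕ → ℤ} (h : c ≤ c') {k : ℕ} :
    D.filLogFun p c k ⊆ D.filLogFun p c' k :=
  fun _ hx i => le_trans (WithTop.coe_le_coe.mpr (neg_le_neg (h i))) (hx i)

variable [hp : Fact p.Prime]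

theorem coe_le_pow_nsmul_v_zero (c : ℤ) (e : ℕ) : (c : WithTop ℤ) ≤ p ^ e • D.v 0 := by
  rw [D.v_zero, WithTop.nsmul_top_of_ne_zero (pow_ne_zero e hp.out.ne_zero)]
  exact le_top

theorem zero_mem_filLogFun (c : ℕ → ℤ) (k : ℕ) : 0 ∈ D.filLogFun p c k := fun i => by
  rw [TruncatedWittVector.coeff_zero]
  exact coe_le_pow_nsmul_v_zero _ _

variable [CharP L p]

/-- After the `p^(k-1)`-power Frobenius and multiplication by the Teichmüller lift `[z^γ]`,
`γ = c j`, the bounds on the coefficients of index `≤ j` become integrality, which subtraction of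
Witt vectors preserves. -/
theorem sub_mem_filLogFun {c : ℕ → ℤ} (hc : Monotone c) (hc0 : 0 ≤ c) {k : ℕ}
    {x y : TruncatedWittVector p k L} (hx : x ∈ D.filLogFun p c k)
    (hy : y ∈ D.filLogFun p c k) : x - y ∈ D.filLogFun p c k := by
  intro j
  obtain ⟨γ, hγ⟩ : ∃ γ : ℕ, (γ : ℤ) = c j := ⟨(c j).toNat, Int.toNat_of_nonneg (hc0 j)⟩
  set e := k - 1
  let Φ : WittVector p L → WittVector p L := fun w =>
    WittVector.teichmuller p (D.z ^ γ) * WittVector.map (iterateFrobenius L p e) w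
  have v_Φ (w : WittVector p L) (i : ℕ) :
      D.v ((Φ w).coeff i) = (((p ^ i * γ : ℕ) : ℤ) : WithTop ℤ) + p ^ e • D.v (w.coeff i) := by
    rw [WittVector.teichmuller_mul_coeff, WittVector.map_coeff, iterateFrobenius_def, D.v_mul,
      ← pow_mul, mul_comm γ, D.v_z_pow, D.v_pow]
  have nsmul_split {i : ℕ} (hi : i ≤ e) (a : WithTop ℤ) : p ^ e • a = p ^ i • p ^ (e - i) • a := by
    rw [smul_smul, ← pow_add, Nat.add_sub_cancel' hi]
  have integral {u} (hu : u ∈ D.filLogFun p c k) (i : ℕ) (hi : i ≤ j) :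
      (Φ u.out).coeff i ∈ D.integers := by
    have hik : i < k := hi.trans_lt j.isLt
    have hbound := WithTop.coe_neg_mul_le_nsmul (p ^ i) (hu ⟨i, hik⟩)
    rw [← nsmul_split (by omega), ← TruncatedWittVector.coeff_out] at hbound
    change 0 ≤ D.v _
    rw [v_Φ, ← WithTop.coe_neg_le_iff_nonneg_add]
    refine le_trans (WithTop.coe_le_coe.mpr ?_) hbound
    push_cast
    exact neg_le_neg (mul_le_mul_of_nonneg_left (hγ ▸ hc hi) (by positivity))
  have hdiff := WittVector.coeff_sub_mem D.integers (integral hx) (integral hy) (i := j)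
  rw [show Φ x.out - Φ y.out = Φ (x.out - y.out) by simp only [Φ, map_sub, mul_sub]] at hdiff
  change 0 ≤ D.v _ at hdiff
  rw [v_Φ, ← WithTop.coe_neg_le_iff_nonneg_add, nsmul_split (Nat.le_sub_one_of_lt j.isLt),
    ← TruncatedWittVector.coeff_sub_eq_coeff_out_sub] at hdiff
  rw [← hγ]
  refine WithTop.coe_neg_le_of_le_nsmul hdiff ?_
  push_cast
  nlinarith [pow_pos hp.out.pos j]

theorem add_mem_filLogFun {c : ℕ → ℤ} (hc : Monotone c) (hc0 : 0 ≤ c) {k : ℕ}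
    {x y : TruncatedWittVector p k L} (hx : x ∈ D.filLogFun p c k)
    (hy : y ∈ D.filLogFun p c k) : x + y ∈ D.filLogFun p c k := by
  simpa using sub_mem_filLogFun hc hc0 hx (sub_mem_filLogFun hc hc0 (zero_mem_filLogFun c k) hy)

end DVField

def filBound (p ρ k i : ℕ) : ℤ :=
  if ρ = 0 then 0 else if k - min (padicValNat p ρ) k ≤ i then ρ else ρ - 1

section FilBound

variable (p : ℕ)

theorem filBound_monotone (ρ k : ℕ) : Monotone (filBound p ρ k) := fun i j hij => by
  unfold filBound
  split_ifs <;> omega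

theorem filBound_nonneg (ρ k : ℕ) : 0 ≤ filBound p ρ k := fun i => by
  change (0 : ℤ) ≤ _
  unfold filBound
  split_ifs <;> omega

theorem filBound_le (ρ k i : ℕ) : filBound p ρ k i ≤ ρ := by
  unfold filBound
  split_ifs <;> omega

theorem sub_one_le_filBound (ρ k i : ℕ) : (ρ : ℤ) - 1 ≤ filBound p ρ k i := by
  unfold filBound
  split_ifs <;> omega

variable [hp : Fact p.Prime]

theorem filBound_lt_mul (r k k' i j : ℕ) : filBound p r k i < p * (filBound p r k' j + 1) := by
  have hp2 : (2 : ℤ) ≤ p := by exact_mod_cast hp.out.two_le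
  rcases Nat.eq_zero_or_pos r with rfl | hr
  · simp only [filBound, if_pos]
    omega
  · nlinarith [filBound_le p r k i, sub_one_le_filBound p r k' j]

theorem filBound_mul_self (ρ n i : ℕ) (hρ : ρ ≠ 0) :
    filBound p (ρ * p) (n + 1) i =
      if n - min (padicValNat p ρ) n ≤ i then (ρ : ℤ) * p else (ρ : ℤ) * p - 1 := by
  have hthreshold : n + 1 - min (padicValNat p (ρ * p)) (n + 1) = n - min (padicValNat p ρ) n := by
    rw [padicValNat.mul hρ hp.out.ne_zero, padicValNat.self hp.out.one_lt]
    omega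
  simp only [filBound, mul_eq_zero, hρ, hp.out.ne_zero, or_self, if_false, hthreshold]
  push_cast
  rfl

theorem mul_filBound_le (ρ n i : ℕ) : p * filBound p ρ n i ≤ filBound p (ρ * p) (n + 1) i := by
  rcases eq_or_ne ρ 0 with rfl | hρ
  · simp [filBound]
  · have hp1 : (1 : ℤ) ≤ p := by exact_mod_cast hp.out.one_lt.le
    rw [filBound_mul_self p ρ n i hρ]
    simp only [filBound, hρ, if_false]
    split_ifs <;> nlinarith

theorem filBound_mul_lt (ρ n i : ℕ) :
    filBound p (ρ * p) (n + 1) i < p * (filBound p ρ n i + 1) := by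
  rcases eq_or_ne ρ 0 with rfl | hρ
  · simpa [filBound] using hp.out.pos
  · have hp0 : (0 : ℤ) < p := by exact_mod_cast hp.out.pos
    rw [filBound_mul_self p ρ n i hρ]
    simp only [filBound, hρ, if_false]
    split_ifs <;> nlinarith

end FilBound

namespace DVField

variable {L : Type} [Field L] {D : DVField L} {p : ℕ}

theorem eq_wVit_of_coeff_eq_zero {m k : ℕ} (hm : m ≤ k) {x : TruncatedWittVector p k L}
    (hx : ∀ i : Fin k, (i : ℕ) < k - m → x.coeff i = 0) :
    x = wVit (TruncatedWittVector.mk p fun j : Fin m => x.coeff ⟨k - m + j, by omega⟩) := by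
  ext i
  simp only [wVit, TruncatedWittVector.coeff_mk]
  split_ifs with hi
  · congr
    ext
    simp only
    omega
  · exact hx i (by omega)

theorem shift_mem_filLog {m k r : ℕ} (hm : m ≤ k) {c : ℕ → ℤ}
    (hc : ∀ i, k - m ≤ i → c i ≤ r) {x : TruncatedWittVector p k L}
    (hx : x ∈ D.filLogFun p c k) :
    TruncatedWittVector.mk p (fun j : Fin m => x.coeff ⟨k - m + j, by omega⟩) ∈
      D.filLog p r m := by
  intro j
  rw [TruncatedWittVector.coeff_mk]
  refine le_trans (WithTop.coe_le_coe.mpr (neg_le_neg (hc (k - m + j) (Nat.le_add_right _ _)))) ?_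
  convert hx ⟨k - m + j, by omega⟩ using 3
  simp only
  omega

variable [hp : Fact p.Prime]

theorem WO_eq_filLogFun (k : ℕ) : D.WO p k = D.filLogFun p (fun _ => 0) k := by
  ext x
  refine forall_congr' fun i => ⟨fun h => ?_, fun h => ?_⟩
  · simpa using nsmul_nonneg h (p ^ (k - 1 - (i : ℕ)))
  · have h' : ((-(0 : ℤ) : ℤ) : WithTop ℤ) ≤ p ^ (k - 1 - (i : ℕ)) • D.v (x.coeff i) := h
    have hpos : (0 : ℤ) < ((p ^ (k - 1 - (i : ℕ)) : ℕ) : ℤ) * (0 + 1) := by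
      rw [zero_add, mul_one]
      exact_mod_cast pow_pos hp.out.pos _
    simpa using WithTop.coe_neg_le_of_le_nsmul h' hpos

theorem wVit_mem_filLogFun {m k r : ℕ} (hm : m ≤ k) {c : ℕ → ℤ}
    (hc : ∀ i, k - m ≤ i → (r : ℤ) ≤ c i) {b : TruncatedWittVector p m L}
    (hb : b ∈ D.filLog p r m) : (wVit b : TruncatedWittVector p k L) ∈ D.filLogFun p c k := by
  intro i
  simp only [wVit, TruncatedWittVector.coeff_mk]
  split_ifs with hi
  · refine le_trans (WithTop.coe_le_coe.mpr (neg_le_neg (hc i hi.1))) ?_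
    convert hb ⟨_, hi.2⟩ using 3
    simp only
    omega
  · exact coe_le_pow_nsmul_v_zero _ _

variable [CharP L p]

theorem filKM_eq_filLogFun (ρ k : ℕ) : D.filKM p ρ k = D.filLogFun p (filBound p ρ k) k := by
  rcases eq_or_ne ρ 0 with rfl | hρ
  · simp only [filKM, if_pos, WO_eq_filLogFun]
    rfl
  set m := min (padicValNat p ρ) k with hm_def
  have hm : m ≤ k := min_le_right _ _
  have bound_low {i : ℕ} (hi : i < k - m) : filBound p ρ k i = (ρ : ℤ) - 1 := by
    simp only [filBound, hρ, if_false, ← hm_def]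
    rw [if_neg (by omega)]
  have bound_high {i : ℕ} (hi : k - m ≤ i) : filBound p ρ k i = ρ := by
    simp only [filBound, hρ, if_false, ← hm_def, if_pos hi]
  have filLog_pred_subset : D.filLog p (ρ - 1) k ⊆ D.filLogFun p (filBound p ρ k) k :=
    fun _ hx => filLogFun_mono (c := fun _ => ((ρ - 1 : ℕ) : ℤ)) (fun i => by
      simpa [Nat.cast_sub (Nat.one_le_iff_ne_zero.mpr hρ)] using sub_one_le_filBound p ρ k i) hx
  simp only [filKM, hρ, if_false]
  ext x
  constructor
  · rintro ⟨a, ha, b, hb, rfl⟩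
    exact add_mem_filLogFun (filBound_monotone p ρ k) (filBound_nonneg p ρ k)
      (filLog_pred_subset ha) (wVit_mem_filLogFun hm (fun i hi => (bound_high hi).ge) hb)
  · intro hx
    let a : TruncatedWittVector p k L :=
      TruncatedWittVector.mk p fun i => if (i : ℕ) < k - m then x.coeff i else 0
    have ha : a ∈ D.filLog p (ρ - 1) k := fun i => by
      simp only [a, TruncatedWittVector.coeff_mk]
      split_ifs with hi
      · simpa [bound_low hi, Nat.cast_sub (Nat.one_le_iff_ne_zero.mpr hρ)] using hx i
      · exact coe_le_pow_nsmul_v_zero _ _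
    have hxa := sub_mem_filLogFun (filBound_monotone p ρ k) (filBound_nonneg p ρ k) hx
      (filLog_pred_subset ha)
    refine ⟨a, ha, _, shift_mem_filLog hm (fun i hi => (bound_high hi).le) hxa, ?_⟩
    rw [← eq_wVit_of_coeff_eq_zero hm
      (fun i hi => TruncatedWittVector.coeff_sub_eq_zero_of_coeff_eq (fun j hj => ?_) hi)]
    · abel
    · simp [a, hj]

end DVField

namespace TruncatedWittVector

variable {p : ℕ} [Fact p.Prime] {R : Type*} [CommRing R] {n : ℕ}

theorem p_nsmul_eq_truncate (y : TruncatedWittVector p n R) :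
    p • y = WittVector.truncate n (y.out * (p : WittVector p R)) := by
  rw [mul_comm, ← nsmul_eq_mul, map_nsmul]
  exact congrArg _ (truncateFun_out y).symm

variable [CharP R p]

theorem coeff_p_nsmul_zero (y : TruncatedWittVector p (n + 1) R) : (p • y).coeff 0 = 0 := by
  rw [p_nsmul_eq_truncate, WittVector.coeff_truncate]
  exact WittVector.mul_charP_coeff_zero _

theorem coeff_p_nsmul_succ (y : TruncatedWittVector p (n + 1) R) (i : Fin n) :
    (p • y).coeff i.succ = y.coeff i.castSucc ^ p := by
  rw [p_nsmul_eq_truncate, WittVector.coeff_truncate, Fin.val_succ,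
    WittVector.mul_charP_coeff_succ, ← coeff_out y i.castSucc, Fin.val_castSucc]

end TruncatedWittVector

section Lift

variable {p : ℕ} {L : Type} [Field L] {n : ℕ}

theorem wR_wRes (x : TruncatedWittVector p n L) :
    wR (wRes x : TruncatedWittVector p (n + 1) L) = x :=
  TruncatedWittVector.ext fun i => by simp [wR, wRes]

variable [Fact p.Prime]

theorem wR_eq_truncate (y : TruncatedWittVector p (n + 1) L) :
    wR y = TruncatedWittVector.truncate (Nat.le_succ n) y :=
  TruncatedWittVector.ext fun _ => by rw [TruncatedWittVector.coeff_truncate]; rfl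

variable [CharP L p]

theorem p_nsmul_eq_of_wR_eq {y y' : TruncatedWittVector p (n + 1) L} (h : wR y = wR y') :
    p • y = p • y' := by
  ext i
  induction i using Fin.cases with
  | zero => simp only [TruncatedWittVector.coeff_p_nsmul_zero]
  | succ i =>
    simp only [TruncatedWittVector.coeff_p_nsmul_succ]
    exact congrArg (· ^ p) (congrArg (TruncatedWittVector.coeff i) h)

theorem wP_eq_p_nsmul {x : TruncatedWittVector p n L} {y : TruncatedWittVector p (n + 1) L}
    (h : wR y = x) : wP x = p • y :=
  p_nsmul_eq_of_wR_eq (by rw [wR_wRes, h])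

theorem p_nsmul_eq_wP_wR (y : TruncatedWittVector p (n + 1) L) : p • y = wP (wR y) :=
  (wP_eq_p_nsmul rfl).symm

theorem wP_coeff_succ (x : TruncatedWittVector p n L) (i : Fin n) :
    (wP x).coeff i.succ = x.coeff i ^ p := by
  rw [wP_eq_p_nsmul (wR_wRes x), TruncatedWittVector.coeff_p_nsmul_succ]
  exact congrArg (· ^ p) (congrArg (TruncatedWittVector.coeff i) (wR_wRes x))

def wPAddHom : TruncatedWittVector p n L →+ TruncatedWittVector p (n + 1) L :=
  AddMonoidHom.mk' wP fun x y => by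
    rw [wP_eq_p_nsmul (y := wRes x + wRes y) (by rw [wR_eq_truncate, map_add, ← wR_eq_truncate,
      ← wR_eq_truncate, wR_wRes, wR_wRes]), smul_add]
    rfl

@[simp] theorem wPAddHom_apply (x : TruncatedWittVector p n L) : wPAddHom x = wP x := rfl

end Lift

namespace DVField

variable {L : Type} [Field L] {D : DVField L} {p : ℕ} [hp : Fact p.Prime]

theorem mem_FilP_zero (r : ℕ) (x : TruncatedWittVector p 0 L) : x ∈ D.FilP p r 0 :=
  ⟨Fin.elim0, fun s => s.elim0, TruncatedWittVector.ext fun i => i.elim0⟩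

variable [CharP L p]

theorem add_mem_filKM {ρ k : ℕ} {x y : TruncatedWittVector p k L} (hx : x ∈ D.filKM p ρ k)
    (hy : y ∈ D.filKM p ρ k) : x + y ∈ D.filKM p ρ k := by
  rw [filKM_eq_filLogFun] at *
  exact add_mem_filLogFun (filBound_monotone p ρ k) (filBound_nonneg p ρ k) hx hy

theorem wR_mem_filKM {ρ n : ℕ} {f : TruncatedWittVector p (n + 1) L}
    (hf : f ∈ D.filKM p (ρ * p) (n + 1)) : wR f ∈ D.filKM p ρ n := by
  rw [filKM_eq_filLogFun] at *
  intro i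
  have hfi := hf i.castSucc
  rw [Fin.val_castSucc, pow_nsmul_eq_nsmul_pow_nsmul p (e' := n - 1 - i) (by omega)] at hfi
  exact WithTop.coe_neg_le_of_le_nsmul hfi (filBound_mul_lt p ρ n i)

theorem wRes_mem_filKM {ρ n : ℕ} {u : TruncatedWittVector p n L} (hu : u ∈ D.filKM p ρ n) :
    (wRes u : TruncatedWittVector p (n + 1) L) ∈ D.filKM p (ρ * p) (n + 1) := by
  rw [filKM_eq_filLogFun] at *
  intro i
  simp only [wRes, TruncatedWittVector.coeff_mk]
  split_ifs with hi
  · rw [pow_nsmul_eq_nsmul_pow_nsmul p (e' := n - 1 - i) (by omega)]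
    refine le_trans (WithTop.coe_le_coe.mpr (neg_le_neg ?_))
      (WithTop.coe_neg_mul_le_nsmul p (hu ⟨i, hi⟩))
    exact mul_filBound_le p ρ n i
  · exact coe_le_pow_nsmul_v_zero _ _

theorem mem_filKM_of_wP_mem {r m : ℕ} {y : TruncatedWittVector p m L}
    (hy : wP y ∈ D.filKM p r (m + 1)) : y ∈ D.filKM p r m := by
  rw [filKM_eq_filLogFun] at *
  intro i
  have hyi := hy i.succ
  rw [wP_coeff_succ, D.v_pow, smul_smul, ← pow_succ,
    pow_nsmul_eq_nsmul_pow_nsmul p (e' := m - 1 - i) (by simp only [Fin.val_succ]; omega)] at hyi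
  exact WithTop.coe_neg_le_of_le_nsmul hyi (filBound_lt_mul p r _ _ _ _)

theorem add_mem_FilP {r n : ℕ} {y z : TruncatedWittVector p (n + 1) L}
    (hy : y ∈ D.filKM p r (n + 1)) (hz : z ∈ D.FilP p r (n + 1)) : y + z ∈ D.FilP p r (n + 1) := by
  obtain ⟨f, hf, rfl⟩ := hz
  refine ⟨Fin.cons (y + f 0) (Fin.tail f), fun s => ?_, ?_⟩
  · induction s using Fin.cases with
    | zero => simpa using add_mem_filKM hy (by simpa using hf 0)
    | succ s => simpa [Fin.tail] using hf s.succ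
  · simp only [Fin.sum_univ_succ, Fin.cons_zero, Fin.cons_succ, Fin.tail, Fin.val_zero,
      pow_zero, one_smul]
    abel

theorem wP_mem_FilP {r n : ℕ} {x : TruncatedWittVector p n L} (hx : x ∈ D.FilP p r n) :
    wP x ∈ D.FilP p r (n + 1) := by
  obtain ⟨u, hu, rfl⟩ := hx
  refine ⟨Fin.cons 0 fun s => wRes (u s), fun s => ?_, ?_⟩
  · induction s using Fin.cases with
    | zero => simpa [filKM_eq_filLogFun] using zero_mem_filLogFun _ _
    | succ s => simpa [pow_succ, mul_assoc] using wRes_mem_filKM (hu s)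
  · rw [← wPAddHom_apply, map_sum, Fin.sum_univ_succ]
    simp only [Fin.cons_zero, Fin.cons_succ, smul_zero, zero_add, map_nsmul, wPAddHom_apply,
      Fin.val_succ, pow_succ, mul_smul]
    rfl

theorem mem_FilP_of_wP_mem {r n : ℕ} {x : TruncatedWittVector p n L}
    (hx : wP x ∈ D.FilP p r (n + 1)) : x ∈ D.FilP p r n := by
  cases n with
  | zero => exact mem_FilP_zero r x
  | succ n =>
    obtain ⟨f, hf, hsum⟩ := hx
    let g : Fin (n + 1) → TruncatedWittVector p (n + 1) L := fun t => wR (f t.succ)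
    have hg (t : Fin (n + 1)) : g t ∈ D.filKM p (r * p ^ (t : ℕ)) (n + 1) :=
      wR_mem_filKM (by simpa [pow_succ, mul_assoc] using hf t.succ)
    set w := ∑ t : Fin (n + 1), p ^ (t : ℕ) • g t
    have hwP : wP (x - w) = f 0 := by
      rw [← wPAddHom_apply, map_sub, map_sum, wPAddHom_apply, hsum, Fin.sum_univ_succ]
      simp only [map_nsmul, wPAddHom_apply, g, ← p_nsmul_eq_wP_wR, Fin.val_succ, pow_succ,
        mul_smul, Fin.val_zero, pow_zero, one_smul]
      exact add_sub_cancel_right _ _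
    have hxw : x - w ∈ D.filKM p r (n + 1) :=
      mem_filKM_of_wP_mem (by simpa [hwP] using hf 0)
    have hw : w ∈ D.FilP p r (n + 1) := ⟨g, hg, rfl⟩
    simpa only [sub_add_cancel] using add_mem_FilP hxw hw

end DVField

theorem statement17_general (p : ℕ) [Fact p.Prime] (L : Type) [Field L] [CharP L p]
    (D : DVField L) (r n : ℕ) :
    Set.range (wP (p := p) (L := L) (n := n)) ∩ D.FilP p r (n + 1) = wP '' D.FilP p r n ∧
    ∀ x : TruncatedWittVector p n L, wP x ∈ D.FilP p r (n + 1) → x ∈ D.FilP p r n := by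
  refine ⟨Set.ext fun y => ⟨?_, ?_⟩, fun _ => DVField.mem_FilP_of_wP_mem⟩
  · rintro ⟨⟨x, rfl⟩, hx⟩
    exact ⟨x, DVField.mem_FilP_of_wP_mem hx, rfl⟩
  · rintro ⟨x, hx, rfl⟩
    exact ⟨⟨x, rfl⟩, DVField.wP_mem_FilP hx⟩

/-- (Weight-zero key step in lem:KerFnFnd-mod.)  Assume `O` is henselian
and admits a coefficient field `K ⊆ O`.  Then for all `r ≥ 0` and `n ≥ 1`:
`p̲(Wₙ(L)) ∩ Fil^p_r W_{n+1}(L) = p̲(Fil^p_r Wₙ(L))`; equivalently, if `p̲(x) ∈ Fil^p_r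
W_{n+1}(L)` then `x ∈ Fil^p_r Wₙ(L)`. -/
theorem statement17 (p : ℕ) [Fact p.Prime] (L : Type) [Field L] [CharP L p]
    (D : DVField L) (hhens : D.IsHenselian) (K : Subfield L) (hK : D.IsCoeffField K)
    (r n : ℕ) (hn : 1 ≤ n) :
    Set.range (wP (p := p) (L := L) (n := n)) ∩ D.FilP p r (n + 1) = wP '' D.FilP p r n ∧
    ∀ x : TruncatedWittVector p n L, wP x ∈ D.FilP p r (n + 1) → x ∈ D.FilP p r n :=
  statement17_general p L D r n
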